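/- For any partition μ = (μ_1 ≥ μ_2 ≥ ... ≥ μ_L), iterated application of Bernstein creation operators produces the Schur function: S_{μ_1} ∘ S_{μ_2} ∘ ... ∘ S_{μ_L} applied to 1 equals s_μ. -/

import Mathlib

open scoped Classical

/-- An integer partition: a weakly decreasing sequence of naturals, eventually zero. -/
structure Ptn where
  parts : ℕ → ℕ
  antitone : ∀ i, parts (i + 1) ≤ parts i
  eventually_zero : ∃ N, ∀ n, N ≤ n → parts n = 0

/-- Number of cells of a partition. -/
noncomputable def Ptn.size (μ : Ptn) : ℕ := ∑ᶠ i, μ.parts i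

/-- Containment of partitions. -/
def PtnSub (ν μ : Ptn) : Prop := ∀ i, ν.parts i ≤ μ.parts i

/-- `HS c lam mu` : lam/mu is a horizontal strip of `c` cells. -/
def HS (c : ℕ) (lam mu : Ptn) : Prop :=
  PtnSub mu lam ∧ lam.size = mu.size + c ∧ ∀ i, lam.parts (i + 1) ≤ mu.parts i

/-- `VS c lam mu` : lam/mu is a vertical strip of `c` cells. -/
def VS (c : ℕ) (lam mu : Ptn) : Prop :=
  PtnSub mu lam ∧ lam.size = mu.size + c ∧ ∀ i, lam.parts i ≤ mu.parts i + 1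

variable (F : Type) [Field F]

/-- The Schur basis element `s_μ`, viewed as a coefficient function on partitions. -/
noncomputable def sB (μ : Ptn) : Ptn → F := fun lam => if lam = μ then 1 else 0

/-- Multiplication by the complete homogeneous symmetric function `h_k` (zero for `k < 0`),
acting on Schur coefficient functions via the Pieri rule. -/
noncomputable def Mh (k : ℤ) (P : Ptn → F) : Ptn → F :=
  fun lam => if k < 0 then 0 else ∑ᶠ (mu : Ptn) (_ : HS k.toNat lam mu), P mu

/-- The Hall-adjoint `e_c^⊥` of multiplication by `e_c`, via the dual Pieri rule. -/
noncomputable def eperp (c : ℕ) (P : Ptn → F) : Ptn → F :=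
  fun nu => ∑ᶠ (mu : Ptn) (_ : VS c mu nu), P mu

/-- The Hall-adjoint `h_c^⊥` of multiplication by `h_c`, via the dual Pieri rule. -/
noncomputable def hperp (c : ℕ) (P : Ptn → F) : Ptn → F :=
  fun nu => ∑ᶠ (mu : Ptn) (_ : HS c mu nu), P mu

/-- The Bernstein creation operator `S_m = Σ_{c≥0} (-1)^c M_{h_{m+c}} ∘ e_c^⊥`. -/
noncomputable def Sop (m : ℤ) (P : Ptn → F) : Ptn → F :=
  fun lam => ∑ᶠ c : ℕ, (-1 : F) ^ c * Mh F (m + c) (eperp F c P) lam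

/-- The Jing creation operator `H_m = Σ_{c≥0} q^c S_{m+c} ∘ h_c^⊥`. -/
noncomputable def Hop (q : F) (m : ℤ) (P : Ptn → F) : Ptn → F :=
  fun lam => ∑ᶠ c : ℕ, q ^ c * Sop F (m + c) (hperp F c P) lam

/-- The empty partition. -/
def ptnZero : Ptn := ⟨fun _ => 0, fun _ => le_refl 0, ⟨0, fun _ _ => rfl⟩⟩

/-- The constant symmetric function `1 = s_∅`. -/
noncomputable def oneSym : Ptn → F := sB F ptnZero

/-!
Induction on the list reduces the theorem to `S_m s_μ = s_{(m, μ)}` for `m ≥ μ₁`. By the two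
Pieri rules, the coefficient of `s_λ` in `S_m s_μ` is `∑ (-1) ^ c` over the pairs `(c, ν)` with
`λ / ν` a horizontal strip of size `m + c` and `μ / ν` a vertical strip of size `c`.
If `λ_{j+1} = μ_j` for all `j`, the only candidate is `(0, μ)`, and it contributes exactly when
`λ = (m, μ)`. Otherwise, at the first row `i` with `λ_{i+1} ≠ μ_i`, both values `μ_i - 1` and
`μ_i` are admissible for `ν_i`, and switching between them is a sign-reversing involution.
-/

namespace Ptn

@[ext]
theorem ext {μ ν : Ptn} (h : μ.parts = ν.parts) : μ = ν := by
  cases μ; cases ν; congr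

theorem exists_bound (μ ν : Ptn) (i : ℕ) :
    ∃ N, i < N ∧ ∀ n, N ≤ n → μ.parts n = 0 ∧ ν.parts n = 0 := by
  obtain ⟨M, hM⟩ := μ.eventually_zero
  obtain ⟨N, hN⟩ := ν.eventually_zero
  exact ⟨M + N + i + 1, by omega, fun n hn => ⟨hM n (by omega), hN n (by omega)⟩⟩

theorem size_eq_sum_range (μ : Ptn) {N : ℕ} (hN : ∀ n, N ≤ n → μ.parts n = 0) :
    μ.size = ∑ i ∈ Finset.range N, μ.parts i := by
  refine finsum_eq_sum_of_support_subset _ fun n hn => ?_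
  simp only [Finset.coe_range, Set.mem_Iio]
  by_contra h
  exact hn (hN n (not_lt.1 h))

theorem size_mono {ν μ : Ptn} (h : PtnSub ν μ) : ν.size ≤ μ.size := by
  obtain ⟨N, -, hN⟩ := exists_bound ν μ 0
  rw [ν.size_eq_sum_range fun n hn => (hN n hn).1, μ.size_eq_sum_range fun n hn => (hN n hn).2]
  exact Finset.sum_le_sum fun j _ => h j

theorem size_lt_of_parts_lt {ν μ : Ptn} (h : PtnSub ν μ) {i : ℕ} (hi : ν.parts i < μ.parts i) :
    ν.size < μ.size := by
  obtain ⟨N, hiN, hN⟩ := exists_bound ν μ i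
  rw [ν.size_eq_sum_range fun n hn => (hN n hn).1, μ.size_eq_sum_range fun n hn => (hN n hn).2]
  exact Finset.sum_lt_sum (fun j _ => h j) ⟨i, Finset.mem_range.2 hiN, hi⟩

theorem size_add_eq_of_parts_eq_update {ν q : Ptn} {i w : ℕ}
    (hq : q.parts = Function.update ν.parts i w) : q.size + ν.parts i = ν.size + w := by
  obtain ⟨N, hiN, hN⟩ := exists_bound ν q i
  have hi : i ∈ Finset.range N := Finset.mem_range.2 hiN
  rw [ν.size_eq_sum_range fun n hn => (hN n hn).1, q.size_eq_sum_range fun n hn => (hN n hn).2,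
    hq, Finset.sum_update_of_mem hi, Finset.sum_eq_sum_sdiff_singleton_add hi]
  omega

theorem finite_setOf_sub (μ : Ptn) : {ν : Ptn | PtnSub ν μ}.Finite := by
  obtain ⟨N, hN⟩ := μ.eventually_zero
  refine Set.Finite.of_finite_image (f := fun ν j => ν.parts (j : Fin N))
    ((Set.Finite.pi' fun j : Fin N => Set.finite_Iic (μ.parts j)).subset ?_) ?_
  · rintro _ ⟨ν, hν, rfl⟩ j
    exact hν j
  · intro ν hν ν' hν' h
    ext j
    by_cases hj : j < N
    · exact congrFun h ⟨j, hj⟩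
    · have := hN j (not_lt.1 hj)
      have := hν j
      have := hν' j
      omega

def cons (m : ℕ) (μ : Ptn) (h : μ.parts 0 ≤ m) : Ptn where
  parts
    | 0 => m
    | j + 1 => μ.parts j
  antitone
    | 0 => h
    | j + 1 => μ.antitone j
  eventually_zero := by
    obtain ⟨N, hN⟩ := μ.eventually_zero
    refine ⟨N + 1, fun n hn => ?_⟩
    obtain ⟨j, rfl⟩ : ∃ j, n = j + 1 := ⟨n - 1, by omega⟩
    exact hN j (by omega)

@[simp]
theorem cons_parts_zero (m : ℕ) (μ : Ptn) (h : μ.parts 0 ≤ m) : (cons m μ h).parts 0 = m := rfl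

@[simp]
theorem cons_parts_succ (m : ℕ) (μ : Ptn) (h : μ.parts 0 ≤ m) (j : ℕ) :
    (cons m μ h).parts (j + 1) = μ.parts j := rfl

theorem size_cons (m : ℕ) (μ : Ptn) (h : μ.parts 0 ≤ m) : (cons m μ h).size = μ.size + m := by
  obtain ⟨N, -, hN⟩ := exists_bound μ μ 0
  rw [size_eq_sum_range _ (N := N + 1) fun n hn => ?_, μ.size_eq_sum_range fun n hn => (hN n hn).1,
    Finset.sum_range_succ']
  · rfl
  · obtain ⟨j, rfl⟩ : ∃ j, n = j + 1 := ⟨n - 1, by omega⟩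
    exact (hN j (by omega)).1

def tail (μ : Ptn) : Ptn :=
  ⟨fun j => μ.parts (j + 1), fun j => μ.antitone (j + 1),
    let ⟨N, hN⟩ := μ.eventually_zero; ⟨N, fun n hn => hN (n + 1) (by omega)⟩⟩

theorem cons_tail (μ : Ptn) : cons (μ.parts 0) μ.tail (μ.antitone 0) = μ := by
  ext (_ | j) <;> rfl

theorem size_eq_size_tail_add (μ : Ptn) : μ.size = μ.tail.size + μ.parts 0 := by
  conv_lhs => rw [← cons_tail μ]
  exact size_cons _ _ _

end Ptn

/-- `lam / f` is a horizontal strip, without the condition on its size. -/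
def Interlaces (lam : Ptn) (f : ℕ → ℕ) : Prop :=
  ∀ j, lam.parts (j + 1) ≤ f j ∧ f j ≤ lam.parts j

theorem Interlaces.update {lam : Ptn} {f : ℕ → ℕ} (hf : Interlaces lam f) {i w : ℕ}
    (hw : lam.parts (i + 1) ≤ w ∧ w ≤ lam.parts i) : Interlaces lam (Function.update f i w) := by
  intro j
  rcases eq_or_ne j i with rfl | hj
  · simpa using hw
  · simpa [hj] using hf j

namespace Ptn

/-- Interlacing forces `f` to be weakly decreasing: `f (j + 1) ≤ lam (j + 1) ≤ f j`. -/
def ofInterlaces {lam : Ptn} {f : ℕ → ℕ} (hf : Interlaces lam f) : Ptn where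
  parts := f
  antitone j := (hf (j + 1)).2.trans (hf j).1
  eventually_zero :=
    let ⟨N, hN⟩ := lam.eventually_zero
    ⟨N, fun n hn => Nat.eq_zero_of_le_zero ((hf n).2.trans (hN n hn).le)⟩

/-- Junk value `ν` unless the updated rows interlace `lam`. -/
noncomputable def setRow (lam ν : Ptn) (i w : ℕ) : Ptn :=
  if h : Interlaces lam (Function.update ν.parts i w) then ofInterlaces h else ν

theorem setRow_parts {lam ν : Ptn} {i w : ℕ} (h : Interlaces lam (Function.update ν.parts i w)) :
    (setRow lam ν i w).parts = Function.update ν.parts i w := by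
  rw [setRow, dif_pos h]
  rfl

theorem setRow_setRow_self {lam ν : Ptn} {i w : ℕ} (hν : Interlaces lam ν.parts)
    (hw : lam.parts (i + 1) ≤ w ∧ w ≤ lam.parts i) :
    setRow lam (setRow lam ν i w) i (ν.parts i) = ν := by
  have h₁ := hν.update hw
  ext1
  rw [setRow_parts (by rw [setRow_parts h₁]; simpa using hν), setRow_parts h₁]
  simp

end Ptn

theorem eperp_sB_apply (c : ℕ) (μ ν : Ptn) :
    eperp F c (sB F μ) ν = if VS c μ ν then 1 else 0 := by
  rw [eperp, finsum_eq_single _ μ fun x hx => by simp [sB, hx]]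
  simp [sB, finsum_eq_if]

theorem Mh_natCast_apply (k : ℕ) (P : Ptn → F) (lam : Ptn) :
    Mh F k P lam = ∑ᶠ (ν : Ptn) (_ : HS k lam ν), P ν := by
  simp [Mh]

/-- The pairs `(c, ν)` contributing to the coefficient of `s_lam` in `S_m s_μ`, each with
sign `(-1) ^ c`. -/
noncomputable def stripPairs (m : ℕ) (μ lam : Ptn) : Finset (ℕ × Ptn) :=
  (Finset.range (μ.size + 1) ×ˢ μ.finite_setOf_sub.toFinset).filter
    fun p => HS (m + p.1) lam p.2 ∧ VS p.1 μ p.2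

theorem mem_stripPairs {m c : ℕ} {μ lam ν : Ptn} :
    (c, ν) ∈ stripPairs m μ lam ↔ Interlaces lam ν.parts
      ∧ (∀ j, ν.parts j ≤ μ.parts j ∧ μ.parts j ≤ ν.parts j + 1)
      ∧ μ.size = ν.size + c ∧ lam.size = μ.size + m := by
  rw [stripPairs, Finset.mem_filter, Finset.mem_product, Finset.mem_range, Set.Finite.mem_toFinset]
  simp only [HS, VS, PtnSub, Interlaces, Set.mem_ofPred_eq]
  constructor
  · rintro ⟨-, ⟨hsub, hsz, hrow⟩, ⟨hsub', hsz', hcol⟩⟩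
    exact ⟨fun j => ⟨hrow j, hsub j⟩, fun j => ⟨hsub' j, hcol j⟩, hsz', by omega⟩
  · rintro ⟨hint, hcol, hsz', hsz⟩
    exact ⟨⟨by omega, fun j => (hcol j).1⟩, ⟨fun j => (hint j).2, by omega, fun j => (hint j).1⟩,
      ⟨fun j => (hcol j).1, hsz', fun j => (hcol j).2⟩⟩

theorem Sop_sB_apply (m : ℕ) (μ lam : Ptn) :
    Sop F m (sB F μ) lam = ∑ p ∈ stripPairs m μ lam, (-1 : F) ^ p.1 := by
  have hMh : ∀ c : ℕ, Mh F (m + c) (eperp F c (sB F μ)) lam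
      = ∑ ν ∈ μ.finite_setOf_sub.toFinset, if HS (m + c) lam ν ∧ VS c μ ν then 1 else 0 := by
    intro c
    rw [← Nat.cast_add, Mh_natCast_apply]
    refine (finsum_congr fun ν => ?_).trans (finsum_eq_sum_of_support_subset _ fun ν hν => ?_)
    · by_cases h : HS (m + c) lam ν <;> simp [h, finsum_eq_if, eperp_sB_apply]
    · by_contra hν'
      exact hν (if_neg fun h => hν' (by simpa using h.2.1))
  rw [Sop, finsum_eq_sum_of_support_subset _ (s := Finset.range (μ.size + 1)) fun c hc => ?_,
    stripPairs, Finset.sum_filter, Finset.sum_product]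
  · refine Finset.sum_congr rfl fun c _ => ?_
    rw [hMh, Finset.mul_sum]
    exact Finset.sum_congr rfl fun ν _ => by split_ifs <;> simp
  · by_contra hc'
    refine hc ?_
    dsimp only
    rw [hMh, Finset.sum_eq_zero fun ν _ => if_neg ?_, mul_zero]
    rintro ⟨-, -, hsz, -⟩
    simp only [Finset.coe_range, Set.mem_Iio] at hc'
    omega

section Toggle

variable {m : ℕ} {μ lam : Ptn} {i : ℕ}

theorem setRow_mem_stripPairs {c c' w : ℕ} {ν : Ptn} (hp : (c, ν) ∈ stripPairs m μ lam)
    (hw : lam.parts (i + 1) ≤ w ∧ w ≤ lam.parts i) (hwμ : w ≤ μ.parts i ∧ μ.parts i ≤ w + 1)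
    (hc : c' + w = c + ν.parts i) : (c', Ptn.setRow lam ν i w) ∈ stripPairs m μ lam := by
  obtain ⟨hint, hcol, hsz, hsz'⟩ := mem_stripPairs.1 hp
  have hq := Ptn.setRow_parts (hint.update hw)
  have := Ptn.size_add_eq_of_parts_eq_update hq
  refine mem_stripPairs.2 ⟨hq ▸ hint.update hw, fun j => ?_, by omega, hsz'⟩
  rcases eq_or_ne j i with rfl | hj
  · simpa [hq] using hwμ
  · simpa [hq, hj] using hcol j

theorem one_le_of_mem_stripPairs {c : ℕ} {ν : Ptn} (hp : (c, ν) ∈ stripPairs m μ lam)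
    (hi : ν.parts i < μ.parts i) : 1 ≤ c := by
  obtain ⟨-, hcol, hsz, -⟩ := mem_stripPairs.1 hp
  have := Ptn.size_lt_of_parts_lt (fun j => (hcol j).1) hi
  omega

/-- Toggle row `i` of `ν` between the two values `μ i - 1` and `μ i` allowed by `μ / ν` being a
vertical strip, adjusting the strip size `c`. -/
noncomputable def toggle (lam μ : Ptn) (i : ℕ) (p : ℕ × Ptn) : ℕ × Ptn :=
  if p.2.parts i < μ.parts i then (p.1 - 1, Ptn.setRow lam p.2 i (μ.parts i))
  else (p.1 + 1, Ptn.setRow lam p.2 i (μ.parts i - 1))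

theorem toggle_fst {p : ℕ × Ptn} (hp : p ∈ stripPairs m μ lam) :
    (toggle lam μ i p).1 + 1 = p.1 ∨ p.1 + 1 = (toggle lam μ i p).1 := by
  obtain ⟨c, ν⟩ := p
  dsimp only [toggle]
  split_ifs with hi
  · have := one_le_of_mem_stripPairs hp hi
    omega
  · omega

variable (h₁ : lam.parts (i + 1) < μ.parts i) (h₂ : μ.parts i ≤ lam.parts i)
include h₁ h₂

theorem toggle_mem {p : ℕ × Ptn} (hp : p ∈ stripPairs m μ lam) :
    toggle lam μ i p ∈ stripPairs m μ lam := by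
  obtain ⟨c, ν⟩ := p
  have hcol := (mem_stripPairs.1 hp).2.1 i
  dsimp only [toggle]
  split_ifs with hi
  · have := one_le_of_mem_stripPairs hp hi
    exact setRow_mem_stripPairs hp ⟨h₁.le, h₂⟩ (by omega) (by omega)
  · exact setRow_mem_stripPairs hp (by omega) (by omega) (by omega)


theorem toggle_toggle {p : ℕ × Ptn} (hp : p ∈ stripPairs m μ lam) :
    toggle lam μ i (toggle lam μ i p) = p := by
  obtain ⟨c, ν⟩ := p
  obtain ⟨hint, hcol, -, -⟩ := mem_stripPairs.1 hp
  have := hcol i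
  by_cases hi : ν.parts i < μ.parts i
  · have hw : lam.parts (i + 1) ≤ μ.parts i ∧ μ.parts i ≤ lam.parts i := ⟨h₁.le, h₂⟩
    have := one_le_of_mem_stripPairs hp hi
    simp only [toggle, hi, if_true, Ptn.setRow_parts (hint.update hw), Function.update_self,
      lt_irrefl, if_false]
    rw [show μ.parts i - 1 = ν.parts i by omega, Ptn.setRow_setRow_self hint hw,
      Nat.sub_add_cancel this]
  · have hw : lam.parts (i + 1) ≤ μ.parts i - 1 ∧ μ.parts i - 1 ≤ lam.parts i := by omega
    simp only [toggle, hi, if_false, Ptn.setRow_parts (hint.update hw), Function.update_self,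
      show μ.parts i - 1 < μ.parts i by omega, if_true, Nat.add_sub_cancel]
    have h := Ptn.setRow_setRow_self hint hw
    rw [show ν.parts i = μ.parts i by omega] at h
    rw [h]

theorem sum_sign_stripPairs_eq_zero :
    ∑ p ∈ stripPairs m μ lam, (-1 : F) ^ p.1 = 0 := by
  refine Finset.sum_involution (fun p _ => toggle lam μ i p) (fun p hp => ?_) (fun p hp _ h => ?_)
    (fun p hp => toggle_mem h₁ h₂ hp) (fun p hp => toggle_toggle h₁ h₂ hp)
  · rcases toggle_fst hp with h | h <;> rw [← h, pow_succ] <;> ring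
  · rcases toggle_fst hp with h' | h' <;> rw [h] at h' <;> omega

end Toggle

theorem sum_sign_stripPairs_eq_zero_of_ne {m : ℕ} {μ lam : Ptn} (hm : μ.parts 0 ≤ m) {i : ℕ}
    (hi : lam.parts (i + 1) ≠ μ.parts i) (hmin : ∀ j < i, lam.parts (j + 1) = μ.parts j) :
    ∑ p ∈ stripPairs m μ lam, (-1 : F) ^ p.1 = 0 := by
  rcases (stripPairs m μ lam).eq_empty_or_nonempty with h | ⟨⟨c, ν⟩, hp⟩
  · rw [h, Finset.sum_empty]
  obtain ⟨hint, hcol, hsz, hsz'⟩ := mem_stripPairs.1 hp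
  refine sum_sign_stripPairs_eq_zero F (lt_of_le_of_ne ((hint i).1.trans (hcol i).1) hi) ?_
  cases i with
  | zero =>
    -- `μ 0 ≤ m ≤ lam 0`, the latter because the tail of `lam` lies inside `ν ⊆ μ`
    have := lam.size_eq_size_tail_add
    have := Ptn.size_mono (ν := lam.tail) (μ := ν) fun j => (hint j).1
    omega
  | succ j => exact (hmin j j.lt_succ_self).symm ▸ μ.antitone j

theorem mem_stripPairs_of_tail_eq {m : ℕ} {μ lam : Ptn} (hm : μ.parts 0 ≤ m)
    (h : ∀ j, lam.parts (j + 1) = μ.parts j) {p : ℕ × Ptn} :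
    p ∈ stripPairs m μ lam ↔ p = (0, μ) ∧ lam = Ptn.cons m μ hm := by
  obtain ⟨c, ν⟩ := p
  rw [mem_stripPairs, Prod.mk.injEq]
  constructor
  · rintro ⟨hint, hcol, hsz, hsz'⟩
    have hν : ν = μ := Ptn.ext <| funext fun j => le_antisymm (hcol j).1 (h j ▸ (hint j).1)
    have htail : lam.tail = μ := Ptn.ext <| funext h
    have := lam.size_eq_size_tail_add
    subst hν
    refine ⟨⟨by omega, rfl⟩, Ptn.ext <| funext fun j => ?_⟩
    cases j with
    | zero => simp only [Ptn.cons_parts_zero]; rw [htail] at this; omega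
    | succ j => exact h j
  · rintro ⟨⟨rfl, rfl⟩, rfl⟩
    refine ⟨fun j => ⟨le_rfl, ?_⟩, fun j => ⟨le_rfl, Nat.le_succ _⟩, rfl, Ptn.size_cons _ _ _⟩
    cases j with
    | zero => exact hm
    | succ j => exact Ptn.antitone _ j

theorem Sop_sB {m : ℕ} {μ : Ptn} (hm : μ.parts 0 ≤ m) :
    Sop F m (sB F μ) = sB F (Ptn.cons m μ hm) := by
  funext lam
  rw [Sop_sB_apply, sB]
  by_cases h : ∀ j, lam.parts (j + 1) = μ.parts j
  · have hS : stripPairs m μ lam = if lam = Ptn.cons m μ hm then {(0, μ)} else ∅ := by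
      ext p
      rw [mem_stripPairs_of_tail_eq hm h]
      split_ifs <;> simp [*]
    rw [hS]
    split_ifs <;> simp
  · push Not at h
    have hne : lam ≠ Ptn.cons m μ hm := by
      rintro rfl
      exact h.elim fun j hj => hj rfl
    rw [if_neg hne]
    exact sum_sign_stripPairs_eq_zero_of_ne F hm (Nat.find_spec h)
      fun j hj => not_not.1 (Nat.find_min h hj)

/-- For any partition `μ = (μ₁ ≥ μ₂ ≥ ... ≥ μ_L)`, given as a weakly decreasing
list of naturals, iterated application of Bernstein creation operators to the
constant symmetric function `1 = s_∅` produces the Schur function: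
`S_{μ₁} ∘ S_{μ₂} ∘ ... ∘ S_{μ_L} (1) = s_μ`. -/
theorem bernstein_iterated_creates_schur (l : List ℕ) (hl : l.Pairwise (· ≥ ·)) :
    ∃ μ : Ptn, (∀ i, μ.parts i = l.getD i 0) ∧
      List.foldr (fun (a : ℕ) (P : Ptn → ℚ) => Sop ℚ (a : ℤ) P) (oneSym ℚ) l = sB ℚ μ := by
  induction l with
  | nil => exact ⟨ptnZero, fun _ => rfl, rfl⟩
  | cons a t ih =>
    obtain ⟨μ, hμ, hfold⟩ := ih hl.of_cons
    have hm : μ.parts 0 ≤ a := by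
      rw [hμ 0]
      cases t with
      | nil => exact Nat.zero_le a
      | cons b t => exact List.rel_of_pairwise_cons hl List.mem_cons_self
    refine ⟨Ptn.cons a μ hm, fun | 0 => rfl | j + 1 => hμ j, ?_⟩
    rw [List.foldr_cons, hfold, Sop_sB]
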